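/- (Worst-case counterexample: API converges to the worst possible policy.) Define T : [0,1] → ℝ by T(ρ) = 1 if 3ρ − 1 > 3ρ and T(ρ) = 0 otherwise. Then T(ρ) = 0 for every ρ ∈ [0,1]; hence ρ = 0 is the unique fixed point of T and approximate policy iteration reaches it from every initial policy in a single round. Moreover the expected return of the policy parameterized by ρ is 2ρ, so the unique fixed point attains expected return 0 while the optimal policy ρ = 1 attains expected return 2: the algorithm converges from every initialization to the inferior of the two deterministic policies. -/

import Mathlib

/-- One round of approximate policy iteration on the worst-case counterexample:
the evaluation step produces θ* = (2ρ, 3ρ, 3ρ−1) and greedification compares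
the look-ahead value 3ρ−1 of the right action against 3ρ for the left action
(ties broken left); output 1 = right, 0 = left. -/
noncomputable def worstAPI (ρ : ℝ) : ℝ := if 3 * ρ - 1 > 3 * ρ then 1 else 0

/-- Expected return of the policy taking the right action with probability ρ:
the left path has return 0 and the right path has return 2. -/
noncomputable def expReturn (ρ : ℝ) : ℝ := 2 * ρ

/-! Whatever the current policy, the fitted look-ahead value of the right action is exactly one
less than that of the left action, so greedification always picks the left action, whose
return is 0. -/

theorem worstAPI_eq_zero (ρ : ℝ) : worstAPI ρ = 0 :=
  if_neg (by linarith)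

theorem worstAPI_eq_self_iff (ρ : ℝ) : worstAPI ρ = ρ ↔ ρ = 0 := by
  rw [worstAPI_eq_zero, eq_comm]

@[simp]
theorem expReturn_zero : expReturn 0 = 0 := mul_zero 2

@[simp]
theorem expReturn_one : expReturn 1 = 2 := mul_one 2

theorem expReturn_worstAPI (ρ : ℝ) : expReturn (worstAPI ρ) = 0 := by
  rw [worstAPI_eq_zero, expReturn_zero]

theorem worst_converges_to_worst_policy :
    (∀ ρ ∈ Set.Icc (0:ℝ) 1, worstAPI ρ = 0) ∧
    (∀ ρ ∈ Set.Icc (0:ℝ) 1, (worstAPI ρ = ρ ↔ ρ = 0)) ∧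
    expReturn 0 = 0 ∧ expReturn 1 = 2 ∧
    (∀ ρ ∈ Set.Icc (0:ℝ) 1, expReturn (worstAPI ρ) = 0 ∧
      expReturn (worstAPI ρ) < expReturn 1) :=
  ⟨fun ρ _ => worstAPI_eq_zero ρ, fun ρ _ => worstAPI_eq_self_iff ρ, expReturn_zero,
    expReturn_one, fun ρ _ => ⟨expReturn_worstAPI ρ, by simp [expReturn_worstAPI]⟩⟩
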